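/- arXiv:2001.05360 — 2 statements merged into one kernel-verified Lean document; each statement's English description precedes it below -/
import Mathlib

section
/- Under Assumptions 1 and 2 with θ^0 an interior point of Θ and ξ ∈ (0,1]: for every ε > 0 there exists κ > 0 such that, almost surely, liminf_{N→∞} inf_{θ ∈ Θ : ‖θ − θ^0‖_1 > ε} f_N(θ) − f(θ^0) ≥ κ. -/
/-!
Fix `x ∈ Θ` with `x ≠ θ⁰` and a small `ρ > 0`. Near `x` the predicted distributions `M'p` and
`M'b` are dominated coordinatewise by those of `x` plus `ρ`, so there `f_N(θ)` is bounded below by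
an empirical average of the bounded functions `a ↦ KL(a ‖ M_x'p_x + ρ)` and
`(a, b) ↦ KL(a ‖ M_x'b + ρ)`. By the strong law, and because `E[a^U] = M⁰'p⁰` and
`E[a^L | b] = M⁰'b`, this average converges almost surely to `f(θ⁰)` plus the smoothed gap
`KL(M⁰'p⁰ ‖ M_x'p_x + ρ) + ξ E KL(M⁰'b ‖ M_x'b + ρ)`. Since `p log(p/r) ≥ p - r + (√p - √r)²`,
the gap is at least half the Hellinger discrepancy between the two models minus `O(ρ)`, and that
discrepancy is positive: if it vanished, positivity of `b` near every vertex would force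
`M_x = M⁰`, and invertibility of `M⁰` would force `p_x = p⁰`. Compactness of
`{θ ∈ Θ : ‖θ - θ⁰‖₁ ≥ ε}` turns these local bounds into a uniform one.
-/

open MeasureTheory ProbabilityTheory Filter Finset
open scoped ENNReal NNReal BigOperators

noncomputable section

namespace GBQL

/-- The probability simplex Δ_C in ℝ^C. -/
def simplex (C : ℕ) : Set (Fin C → ℝ) :=
  {x | (∀ i, 0 ≤ x i) ∧ ∑ i, x i = 1}

/-- A C×C matrix (as a function) is row-stochastic. -/
def rowStochastic {C : ℕ} (M : Fin C → Fin C → ℝ) : Prop :=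
  (∀ i j, 0 ≤ M i j) ∧ ∀ i, ∑ j, M i j = 1

/-- M' x, the transpose of M applied to x : (M'x)_j = Σ_i M_{ij} x_i. -/
def mtv {C : ℕ} (M : Fin C → Fin C → ℝ) (x : Fin C → ℝ) : Fin C → ℝ :=
  fun j => ∑ i, M i j * x i

open scoped Classical in
/-- Kullback–Leibler divergence D_KL(p‖q) = Σ_j p_j log(p_j/q_j) as an element of [0,∞],
with conventions 0·log(0/x) = 0 and p_j log(p_j/0) = ∞ for p_j > 0. -/
def klDiv {C : ℕ} (p q : Fin C → ℝ) : ℝ≥0∞ :=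
  if ∃ j, 0 < p j ∧ q j = 0 then ⊤
  else ENNReal.ofReal (∑ j, if p j = 0 then 0 else p j * Real.log (p j / q j))

/-- Real-valued Kullback–Leibler divergence (agreeing with `klDiv` whenever `q` has
strictly positive entries). -/
def klReal {C : ℕ} (p q : Fin C → ℝ) : ℝ :=
  ∑ j, if p j = 0 then 0 else p j * Real.log (p j / q j)

/-- Completion of a C×(C−1) matrix M̃ to a C×C matrix M with M_{iC} = 1 − Σ_{j<C} M_{ij}. -/
def completeM {c : ℕ} (Mt : Fin (c+1) → Fin c → ℝ) : Fin (c+1) → Fin (c+1) → ℝ :=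
  fun i j => if h : (j : ℕ) < c then Mt i ⟨j, h⟩ else 1 - ∑ k, Mt i k

/-- Completion of p̃ ∈ ℝ^{C−1} to p ∈ ℝ^C with p_C = 1 − Σ_{i<C} p_i. -/
def completeV {c : ℕ} (pt : Fin c → ℝ) : Fin (c+1) → ℝ :=
  fun i => if h : (i : ℕ) < c then pt ⟨i, h⟩ else 1 - ∑ k, pt k

/-- The first C−1 columns of a C×C matrix. -/
def truncM {c : ℕ} (M : Fin (c+1) → Fin (c+1) → ℝ) : Fin (c+1) → Fin c → ℝ :=
  fun i j => M i (Fin.castSucc j)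

/-- The first C−1 coordinates of a vector in ℝ^C. -/
def truncV {c : ℕ} (p : Fin (c+1) → ℝ) : Fin c → ℝ := fun i => p (Fin.castSucc i)

/-- The parameter space: θ = (M̃, p̃). -/
abbrev Param (c : ℕ) := (Fin (c+1) → Fin c → ℝ) × (Fin c → ℝ)

/-- S_d = {x ∈ ℝ^d : x_i ≥ 0, Σ_i x_i ≤ 1}. -/
def Sset (d : ℕ) : Set (Fin d → ℝ) := {x | (∀ i, 0 ≤ x i) ∧ ∑ i, x i ≤ 1}

/-- Θ = (S_{C−1})^C × S_{C−1}. -/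
def Theta (c : ℕ) : Set (Param c) := {θ | (∀ i, θ.1 i ∈ Sset c) ∧ θ.2 ∈ Sset c}

/-- ℓ1 distance on the concatenated coordinates of θ. -/
def l1dist {c : ℕ} (θ θ' : Param c) : ℝ :=
  (∑ i, ∑ j, |θ.1 i j - θ'.1 i j|) + ∑ i, |θ.2 i - θ'.2 i|

/-- The empirical loss f_N(θ), valued in [0,∞]. -/
def fN {c : ℕ} (N n : ℕ) (aU aL bL : ℕ → Fin (c+1) → ℝ) (θ : Param c) : ℝ≥0∞ :=
  ((∑ r ∈ Finset.range N, klDiv (aU r) (mtv (completeM θ.1) (completeV θ.2))) +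
    ∑ r ∈ Finset.range n, klDiv (aL r) (mtv (completeM θ.1) (bL r))) / (N : ℝ≥0∞)

/-- The empirical loss f_N(θ), real-valued version (valid near interior points). -/
def fNreal {c : ℕ} (N n : ℕ) (aU aL bL : ℕ → Fin (c+1) → ℝ) (θ : Param c) : ℝ :=
  ((∑ r ∈ Finset.range N, klReal (aU r) (mtv (completeM θ.1) (completeV θ.2))) +
    ∑ r ∈ Finset.range n, klReal (aL r) (mtv (completeM θ.1) (bL r))) / (N : ℝ)

/-- exp(−x) for x ∈ [0,∞], with exp(−∞) = 0. -/
def expNeg (x : ℝ≥0∞) : ℝ≥0∞ :=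
  if x = ⊤ then 0 else ENNReal.ofReal (Real.exp (-x.toReal))

/-- The extended logarithm [0,∞] → [−∞,∞]. -/
def elog (x : ℝ≥0∞) : EReal :=
  if x = 0 then ⊥ else if x = ⊤ then ⊤ else ((Real.log x.toReal : ℝ) : EReal)

/-- Index set for the coordinates of θ = (M̃, p̃): pairs (i,j) for M̃ entries and i for p̃. -/
abbrev Idx (c : ℕ) := (Fin (c+1) × Fin c) ⊕ Fin c

/-- Coordinates of θ as a vector indexed by `Idx c`. -/
def vecParam {c : ℕ} (θ : Param c) : Idx c → ℝ :=
  Sum.elim (fun ij => θ.1 ij.1 ij.2) (fun i => θ.2 i)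

/-- Standard basis vectors of the parameter space, indexed by `Idx c`. -/
def basisP (c : ℕ) : Idx c → Param c :=
  Sum.elim (fun ij => (fun i j => if i = ij.1 ∧ j = ij.2 then 1 else 0, 0))
    (fun i0 => (0, fun i => if i = i0 then 1 else 0))

open Topology

section Simplex

variable {C : ℕ}

lemma le_one_of_mem_simplex {x : Fin C → ℝ} (hx : x ∈ simplex C) (i : Fin C) : x i ≤ 1 :=
  hx.2 ▸ Finset.single_le_sum (fun j _ => hx.1 j) (Finset.mem_univ i)

lemma mtv_mem_simplex {M : Fin C → Fin C → ℝ} {x : Fin C → ℝ} (hM : ∀ i, M i ∈ simplex C)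
    (hx : x ∈ simplex C) : mtv M x ∈ simplex C := by
  refine ⟨fun j => Finset.sum_nonneg fun i _ => mul_nonneg ((hM i).1 j) (hx.1 i), ?_⟩
  simp only [mtv]
  rw [Finset.sum_comm]
  simp [← Finset.sum_mul, (hM _).2, hx.2]

lemma le_mtv {M : Fin C → Fin C → ℝ} {x : Fin C → ℝ} {m : ℝ} (hM : ∀ i j, m ≤ M i j)
    (hx : x ∈ simplex C) (j : Fin C) : m ≤ mtv M x j :=
  calc m = ∑ i, m * x i := by rw [← Finset.mul_sum, hx.2, mul_one]
    _ ≤ mtv M x j := Finset.sum_le_sum fun i _ => mul_le_mul_of_nonneg_right (hM i j) (hx.1 i)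

lemma exists_pos_le_mtv [NeZero C] {M : Fin C → Fin C → ℝ} (hM : ∀ i j, 0 < M i j) :
    ∃ m > 0, ∀ x ∈ simplex C, ∀ j, m ≤ mtv M x j := by
  obtain ⟨ij, hij⟩ := Finite.exists_min fun ij : Fin C × Fin C => M ij.1 ij.2
  exact ⟨_, hM ij.1 ij.2, fun x hx => le_mtv (fun i j => hij (i, j)) hx⟩

lemma mtv_le_mtv_add {M M' : Fin C → Fin C → ℝ} {x : Fin C → ℝ} {ρ : ℝ}
    (h : ∀ i j, M i j ≤ M' i j + ρ) (hx : x ∈ simplex C) (j : Fin C) :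
    mtv M x j ≤ mtv M' x j + ρ :=
  calc mtv M x j ≤ ∑ i, (M' i j + ρ) * x i :=
        Finset.sum_le_sum fun i _ => mul_le_mul_of_nonneg_right (h i j) (hx.1 i)
    _ = mtv M' x j + ρ := by simp [mtv, add_mul, Finset.sum_add_distrib, ← Finset.mul_sum, hx.2]

@[fun_prop] lemma continuous_mtv (M : Fin C → Fin C → ℝ) : Continuous (mtv M) := by
  unfold mtv; fun_prop

@[fun_prop] lemma measurable_mtv (M : Fin C → Fin C → ℝ) : Measurable (mtv M) :=
  (continuous_mtv M).measurable

lemma add_mem_Icc_of_mem_simplex {q : Fin C → ℝ} (hq : q ∈ simplex C) (ρ : ℝ) (j : Fin C) :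
    q j + ρ ∈ Set.Icc ρ (1 + ρ) :=
  ⟨by linarith [hq.1 j], by linarith [le_one_of_mem_simplex hq j]⟩

end Simplex

section KL

variable {C : ℕ}

/-- Twice the squared Hellinger distance. -/
def hellingerSq (p q : Fin C → ℝ) : ℝ :=
  ∑ j, (√(p j) - √(q j)) ^ 2

lemma hellingerSq_nonneg (p q : Fin C → ℝ) : 0 ≤ hellingerSq p q :=
  Finset.sum_nonneg fun _ _ => sq_nonneg _

lemma hellingerSq_le_two {p q : Fin C → ℝ} (hp : p ∈ simplex C) (hq : q ∈ simplex C) :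
    hellingerSq p q ≤ 2 :=
  calc hellingerSq p q ≤ ∑ j, (p j + q j) := Finset.sum_le_sum fun j _ => by
        nlinarith [Real.sq_sqrt (hp.1 j), Real.sq_sqrt (hq.1 j),
          mul_nonneg (Real.sqrt_nonneg (p j)) (Real.sqrt_nonneg (q j))]
    _ = 2 := by rw [Finset.sum_add_distrib, hp.2, hq.2]; norm_num

lemma eq_of_hellingerSq_eq_zero {p q : Fin C → ℝ} (hp : ∀ j, 0 ≤ p j) (hq : ∀ j, 0 ≤ q j)
    (h : hellingerSq p q = 0) : p = q := by
  funext j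
  have := (Finset.sum_eq_zero_iff_of_nonneg fun j _ => sq_nonneg (√(p j) - √(q j))).1 h j
    (Finset.mem_univ j)
  rwa [sq_eq_zero_iff, sub_eq_zero, Real.sqrt_inj (hp j) (hq j)] at this

lemma hellingerSq_le_add {p q : Fin C → ℝ} (hq : ∀ j, 0 ≤ q j) {ρ : ℝ} (hρ : 0 ≤ ρ) :
    hellingerSq p q ≤ 2 * hellingerSq p (fun j => q j + ρ) + 2 * C * ρ := by
  have hterm : ∀ j, (√(p j) - √(q j)) ^ 2 ≤ 2 * (√(p j) - √(q j + ρ)) ^ 2 + 2 * ρ := by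
    intro j
    -- `(x + y)² ≤ 2x² + 2y²` and `(√(q+ρ) - √q)² ≤ (√(q+ρ) - √q)(√(q+ρ) + √q) = ρ`
    have h1 : √(q j) ≤ √(q j + ρ) := Real.sqrt_le_sqrt (by linarith)
    have h2 := Real.sq_sqrt (hq j)
    have h3 := Real.sq_sqrt (show 0 ≤ q j + ρ by linarith [hq j])
    nlinarith [Real.sqrt_nonneg (q j), sq_nonneg (√(p j) - √(q j + ρ) - (√(q j + ρ) - √(q j)))]
  calc hellingerSq p q ≤ ∑ j, (2 * (√(p j) - √(q j + ρ)) ^ 2 + 2 * ρ) :=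
        Finset.sum_le_sum fun j _ => hterm j
    _ = _ := by simp [hellingerSq, Finset.sum_add_distrib, Finset.mul_sum]; ring

lemma continuous_hellingerSq : Continuous fun x : (Fin C → ℝ) × (Fin C → ℝ) =>
    hellingerSq x.1 x.2 := by
  unfold hellingerSq; fun_prop

lemma klReal_eq_sum (p q : Fin C → ℝ) : klReal p q = ∑ j, p j * Real.log (p j / q j) :=
  Finset.sum_congr rfl fun j _ => by split_ifs with h <;> simp [h]

lemma klReal_eq_klReal_add (a : Fin C → ℝ) {p r : Fin C → ℝ} (hp : ∀ j, 0 < p j)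
    (hr : ∀ j, 0 < r j) : klReal a r = klReal a p + ∑ j, a j * Real.log (p j / r j) := by
  simp only [klReal_eq_sum, ← Finset.sum_add_distrib, ← mul_add]
  refine Finset.sum_congr rfl fun j _ => ?_
  rcases eq_or_ne (a j) 0 with h | h
  · simp [h]
  · rw [Real.log_div h (hr j).ne', Real.log_div h (hp j).ne', Real.log_div (hp j).ne' (hr j).ne']
    ring

lemma klDiv_eq_ofReal_klReal (p : Fin C → ℝ) {q : Fin C → ℝ} (hq : ∀ j, 0 < q j) :
    klDiv p q = ENNReal.ofReal (klReal p q) := by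
  classical
  rw [klDiv, if_neg (by simp [(hq _).ne'])]
  rfl

lemma ofReal_klReal_le_klDiv {p q r : Fin C → ℝ} (hp : ∀ j, 0 ≤ p j) (hq : ∀ j, 0 ≤ q j)
    (hqr : q ≤ r) : ENNReal.ofReal (klReal p r) ≤ klDiv p q := by
  classical
  rw [klDiv]
  split_ifs with h
  · exact le_top
  push Not at h
  refine ENNReal.ofReal_le_ofReal (Finset.sum_le_sum fun j _ => ?_)
  split_ifs with hpj
  · rfl
  have hpj' : 0 < p j := (hp j).lt_of_ne' hpj
  have hqj : 0 < q j := (hq j).lt_of_ne' (h j hpj')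
  exact mul_le_mul_of_nonneg_left (Real.log_le_log (div_pos hpj' (hqj.trans_le (hqr j)))
    (div_le_div_of_nonneg_left hpj'.le hqj (hqr j))) hpj'.le

lemma mul_log_div_ge {p r : ℝ} (hp : 0 ≤ p) (hr : 0 < r) :
    p - r + (√p - √r) ^ 2 ≤ p * Real.log (p / r) := by
  rcases hp.eq_or_lt with rfl | hp
  · simp [Real.sq_sqrt hr.le]
  set s := √p
  set t := √r
  have hs : 0 < s := Real.sqrt_pos.2 hp
  have ht : 0 < t := Real.sqrt_pos.2 hr
  have hps : p = s ^ 2 := (Real.sq_sqrt hp.le).symm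
  have hrt : r = t ^ 2 := (Real.sq_sqrt hr.le).symm
  -- with `p = s²`, `r = t²` the claim is `2 s² (1 - t / s) ≤ 2 s² log (s / t)`: `log y ≤ y - 1`
  have hlog : 1 - t / s ≤ Real.log (s / t) := by
    have := Real.log_le_sub_one_of_pos (div_pos ht hs)
    rw [← neg_neg (Real.log (s / t)), ← Real.log_inv, inv_div]
    linarith
  have key : 2 * s ^ 2 * (1 - t / s) = 2 * s ^ 2 - 2 * s * t := by field_simp
  rw [hps, hrt, ← div_pow, Real.log_pow]
  nlinarith [mul_le_mul_of_nonneg_left hlog (by positivity : (0 : ℝ) ≤ 2 * s ^ 2)]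

lemma sum_sub_add_hellingerSq_le_klReal {p r : Fin C → ℝ} (hp : ∀ j, 0 ≤ p j)
    (hr : ∀ j, 0 < r j) : ∑ j, (p j - r j) + hellingerSq p r ≤ klReal p r := by
  rw [hellingerSq, ← Finset.sum_add_distrib, klReal_eq_sum]
  exact Finset.sum_le_sum fun j _ => mul_log_div_ge (hp j) (hr j)

lemma klReal_nonneg {p r : Fin C → ℝ} (hp : p ∈ simplex C) (hr : ∀ j, 0 < r j)
    (hr_sum : ∑ j, r j ≤ 1) : 0 ≤ klReal p r := by
  have := sum_sub_add_hellingerSq_le_klReal hp.1 hr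
  rw [Finset.sum_sub_distrib, hp.2] at this
  linarith [hellingerSq_nonneg p r]

lemma hellingerSq_div_two_sub_le_klReal {p q : Fin C → ℝ} (hp : p ∈ simplex C)
    (hq : q ∈ simplex C) {ρ : ℝ} (hρ : 0 < ρ) :
    hellingerSq p q / 2 - 2 * C * ρ ≤ klReal p (fun j => q j + ρ) := by
  have h1 := sum_sub_add_hellingerSq_le_klReal hp.1 fun j =>
    hρ.trans_le (add_mem_Icc_of_mem_simplex hq ρ j).1
  have h2 := hellingerSq_le_add (p := p) hq.1 hρ.le
  simp only [Finset.sum_sub_distrib, Finset.sum_add_distrib, hp.2, hq.2, Finset.sum_const,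
    Finset.card_univ, Fintype.card_fin, nsmul_eq_mul] at h1
  linarith

lemma abs_log_le_of_mem_Icc {m M x : ℝ} (hm : 0 < m) (hx : x ∈ Set.Icc m M) :
    |Real.log x| ≤ |Real.log m| + |Real.log M| := by
  have h1 := Real.log_le_log hm hx.1
  have h2 := Real.log_le_log (hm.trans_le hx.1) hx.2
  rw [abs_le]
  constructor <;> linarith [neg_abs_le (Real.log m), le_abs_self (Real.log M),
    abs_nonneg (Real.log m), abs_nonneg (Real.log M)]

lemma abs_log_div_le {m M x y : ℝ} (hm : 0 < m) (hx : x ∈ Set.Icc m 1) (hy : y ∈ Set.Icc m M) :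
    |Real.log (x / y)| ≤ 2 * |Real.log m| + |Real.log M| := by
  have hxlog := abs_log_le_of_mem_Icc hm hx
  rw [Real.log_one, abs_zero, add_zero] at hxlog
  rw [Real.log_div (hm.trans_le hx.1).ne' (hm.trans_le hy.1).ne']
  linarith [abs_sub (Real.log x) (Real.log y), abs_log_le_of_mem_Icc hm hy]

lemma abs_klReal_le {p r : Fin C → ℝ} (hp : p ∈ simplex C) {m M : ℝ} (hm : 0 < m)
    (hr : ∀ j, r j ∈ Set.Icc m M) : |klReal p r| ≤ C * (1 + |Real.log m| + |Real.log M|) := by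
  have hterm : ∀ j, |p j * Real.log (p j / r j)| ≤ 1 + |Real.log m| + |Real.log M| := by
    intro j
    rcases (hp.1 j).eq_or_lt with h0 | hpos
    · simp [← h0]; positivity
    rw [Real.log_div hpos.ne' (hm.trans_le (hr j).1).ne', mul_sub]
    have h1 : |p j * Real.log (p j)| ≤ 1 := by
      rw [mul_comm]; exact (Real.abs_log_mul_self_lt _ hpos (le_one_of_mem_simplex hp j)).le
    have h2 : |p j * Real.log (r j)| ≤ |Real.log m| + |Real.log M| := by
      rw [abs_mul, abs_of_nonneg (hp.1 j)]
      exact (mul_le_of_le_one_left (abs_nonneg _) (le_one_of_mem_simplex hp j)).trans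
        (abs_log_le_of_mem_Icc hm (hr j))
    linarith [abs_sub (p j * Real.log (p j)) (p j * Real.log (r j))]
  calc |klReal p r| ≤ ∑ j, |p j * Real.log (p j / r j)| := by
        rw [klReal_eq_sum]; exact Finset.abs_sum_le_sum_abs _ _
    _ ≤ ∑ _j : Fin C, (1 + |Real.log m| + |Real.log M|) := Finset.sum_le_sum fun j _ => hterm j
    _ = _ := by simp; ring

lemma measurable_klReal : Measurable fun x : (Fin C → ℝ) × (Fin C → ℝ) => klReal x.1 x.2 := by
  simp only [klReal_eq_sum]
  fun_prop

end KL

section Integrals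

variable {C : ℕ} {Ω β : Type*} [MeasurableSpace Ω] [MeasurableSpace β] {μ : Measure Ω}

lemma integrable_klReal [IsFiniteMeasure μ] {a r : Ω → Fin C → ℝ} (ha : Measurable a)
    (hr : Measurable r) (ha_simplex : ∀ ω, a ω ∈ simplex C) {m M : ℝ} (hm : 0 < m)
    (hrm : ∀ ω j, r ω j ∈ Set.Icc m M) : Integrable (fun ω => klReal (a ω) (r ω)) μ :=
  Integrable.of_bound (measurable_klReal.comp (ha.prodMk hr)).aestronglyMeasurable _
    (ae_of_all _ fun ω => (Real.norm_eq_abs _).le.trans (abs_klReal_le (ha_simplex ω) hm (hrm ω)))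

lemma integrable_apply_of_mem_simplex [IsFiniteMeasure μ] {a : Ω → Fin C → ℝ}
    (ha : Measurable a) (ha_simplex : ∀ ω, a ω ∈ simplex C) (j : Fin C) :
    Integrable (fun ω => a ω j) μ :=
  Integrable.of_bound (by fun_prop) 1 (ae_of_all _ fun ω => by
    rw [Real.norm_eq_abs, abs_of_nonneg ((ha_simplex ω).1 j)]
    exact le_one_of_mem_simplex (ha_simplex ω) j)

lemma integral_klReal_nonneg {a q : Ω → Fin C → ℝ} (ha : ∀ ω, a ω ∈ simplex C)
    (hq : ∀ ω, q ω ∈ simplex C) {m : ℝ} (hm : 0 < m) (hqm : ∀ ω j, m ≤ q ω j) :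
    0 ≤ ∫ ω, klReal (a ω) (q ω) ∂μ :=
  integral_nonneg fun ω => klReal_nonneg (ha ω) (fun j => hm.trans_le (hqm ω j)) (hq ω).2.le

lemma lintegral_klDiv_eq_ofReal_integral [IsFiniteMeasure μ] {a q : Ω → Fin C → ℝ}
    (ha : Measurable a) (hq : Measurable q) (ha_simplex : ∀ ω, a ω ∈ simplex C)
    (hq_simplex : ∀ ω, q ω ∈ simplex C) {m : ℝ} (hm : 0 < m) (hqm : ∀ ω j, m ≤ q ω j) :
    ∫⁻ ω, klDiv (a ω) (q ω) ∂μ = ENNReal.ofReal (∫ ω, klReal (a ω) (q ω) ∂μ) := by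
  rw [ofReal_integral_eq_lintegral_ofReal (integrable_klReal ha hq ha_simplex hm fun ω j =>
      ⟨hqm ω j, le_one_of_mem_simplex (hq_simplex ω) j⟩)
    (ae_of_all _ fun ω => klReal_nonneg (ha_simplex ω) (fun j => hm.trans_le (hqm ω j))
      (hq_simplex ω).2.le)]
  exact lintegral_congr fun ω => klDiv_eq_ofReal_klReal _ fun j => hm.trans_le (hqm ω j)

lemma integral_comp_mul_eq_of_condExp [IsFiniteMeasure μ] {X : Ω → ℝ} {Y : Ω → β} {g h : β → ℝ}
    (hY : Measurable Y) (hg : Measurable g) (hX : Integrable X μ) {B : ℝ}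
    (hgB : ∀ ω, |g (Y ω)| ≤ B)
    (hcond : μ[X | MeasurableSpace.comap Y inferInstance] =ᵐ[μ] fun ω => h (Y ω)) :
    ∫ ω, g (Y ω) * X ω ∂μ = ∫ ω, g (Y ω) * h (Y ω) ∂μ := by
  have hgX : Integrable (fun ω => g (Y ω) * X ω) μ :=
    hX.bdd_mul (hg.comp hY).aestronglyMeasurable (ae_of_all _ fun ω => (hgB ω).trans' (by simp))
  calc ∫ ω, g (Y ω) * X ω ∂μ
      = ∫ ω, μ[fun ω => g (Y ω) * X ω | MeasurableSpace.comap Y inferInstance] ω ∂μ :=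
        (integral_condExp hY.comap_le).symm
    _ = ∫ ω, g (Y ω) * h (Y ω) ∂μ := integral_congr_ae <|
        (condExp_mul_of_stronglyMeasurable_left (hg.comp (comap_measurable Y)).stronglyMeasurable
          hgX hX).trans (hcond.mono fun ω hω => by simp [hω])

variable [IsProbabilityMeasure μ]

theorem integral_klReal_eq_add {a : Ω → Fin C → ℝ} {Y : Ω → β} {P R : β → Fin C → ℝ}
    (ha : Measurable a) (hY : Measurable Y) (hP : Measurable P) (hR : Measurable R)
    (ha_simplex : ∀ ω, a ω ∈ simplex C) (hP_simplex : ∀ ω, P (Y ω) ∈ simplex C) {m M : ℝ}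
    (hm : 0 < m) (hPm : ∀ ω j, m ≤ P (Y ω) j) (hRm : ∀ ω j, R (Y ω) j ∈ Set.Icc m M)
    (hmean : ∀ j (g : β → ℝ), Measurable g → (∃ B, ∀ ω, |g (Y ω)| ≤ B) →
      ∫ ω, g (Y ω) * a ω j ∂μ = ∫ ω, g (Y ω) * P (Y ω) j ∂μ) :
    ∫ ω, klReal (a ω) (R (Y ω)) ∂μ =
      ∫ ω, klReal (a ω) (P (Y ω)) ∂μ + ∫ ω, klReal (P (Y ω)) (R (Y ω)) ∂μ := by
  have hPm' : ∀ ω j, P (Y ω) j ∈ Set.Icc m 1 := fun ω j =>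
    ⟨hPm ω j, le_one_of_mem_simplex (hP_simplex ω) j⟩
  set g : Fin C → β → ℝ := fun j y => Real.log (P y j / R y j)
  have hg : ∀ j, Measurable (g j) := fun j => by fun_prop
  have hg_bd : ∀ j ω, ‖g j (Y ω)‖ ≤ 2 * |Real.log m| + |Real.log M| := fun j ω =>
    abs_log_div_le hm (hPm' ω j) (hRm ω j)
  have hintA : ∀ j, Integrable (fun ω => g j (Y ω) * a ω j) μ := fun j =>
    (integrable_apply_of_mem_simplex ha ha_simplex j).bdd_mul
      ((hg j).comp hY).aestronglyMeasurable (ae_of_all _ (hg_bd j))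
  have hintP : ∀ j, Integrable (fun ω => g j (Y ω) * P (Y ω) j) μ := fun j =>
    (integrable_apply_of_mem_simplex (hP.comp hY) hP_simplex j).bdd_mul
      ((hg j).comp hY).aestronglyMeasurable (ae_of_all _ (hg_bd j))
  calc ∫ ω, klReal (a ω) (R (Y ω)) ∂μ
      = ∫ ω, (klReal (a ω) (P (Y ω)) + ∑ j, g j (Y ω) * a ω j) ∂μ := by
        refine integral_congr_ae (ae_of_all _ fun ω => ?_)
        simp only [klReal_eq_klReal_add (a ω) (fun j => hm.trans_le (hPm ω j))
          (fun j => hm.trans_le (hRm ω j).1), g, mul_comm]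
    _ = ∫ ω, klReal (a ω) (P (Y ω)) ∂μ + ∑ j, ∫ ω, g j (Y ω) * P (Y ω) j ∂μ := by
        rw [integral_add (integrable_klReal (r := fun ω => P (Y ω)) ha (hP.comp hY) ha_simplex hm
          hPm') (integrable_finsetSum _ fun j _ => hintA j),
          integral_finsetSum _ fun j _ => hintA j]
        exact congrArg _ (Finset.sum_congr rfl fun j _ => hmean j (g j) (hg j) ⟨_, hg_bd j⟩)
    _ = _ := by
        rw [← integral_finsetSum _ fun j _ => hintP j]
        congr 2 with ω
        simp only [klReal_eq_sum, g, mul_comm]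

theorem integral_klReal_eq_add_of_integral_eq {a : Ω → Fin C → ℝ} (ha : Measurable a)
    (ha_simplex : ∀ ω, a ω ∈ simplex C) {q r : Fin C → ℝ} (hq : q ∈ simplex C) {m M : ℝ}
    (hm : 0 < m) (hqm : ∀ j, m ≤ q j) (hr : ∀ j, r j ∈ Set.Icc m M)
    (hmean : ∀ j, ∫ ω, a ω j ∂μ = q j) :
    ∫ ω, klReal (a ω) r ∂μ = ∫ ω, klReal (a ω) q ∂μ + klReal q r := by
  simpa using integral_klReal_eq_add (μ := μ) (Y := fun _ => ()) (P := fun _ => q)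
    (R := fun _ => r) ha measurable_const measurable_const measurable_const ha_simplex
    (fun _ => hq) hm (fun _ => hqm) (fun _ => hr) fun j g _ _ => by
      rw [integral_const_mul, hmean j]; simp

theorem integral_klReal_eq_add_of_condExp_eq {a : Ω → Fin C → ℝ} {Y : Ω → β}
    {P R : β → Fin C → ℝ} (ha : Measurable a) (hY : Measurable Y) (hP : Measurable P)
    (hR : Measurable R) (ha_simplex : ∀ ω, a ω ∈ simplex C)
    (hP_simplex : ∀ ω, P (Y ω) ∈ simplex C) {m M : ℝ} (hm : 0 < m) (hPm : ∀ ω j, m ≤ P (Y ω) j)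
    (hRm : ∀ ω j, R (Y ω) j ∈ Set.Icc m M)
    (hcond : ∀ j, μ[(fun ω => a ω j) | MeasurableSpace.comap Y inferInstance]
      =ᵐ[μ] fun ω => P (Y ω) j) :
    ∫ ω, klReal (a ω) (R (Y ω)) ∂μ =
      ∫ ω, klReal (a ω) (P (Y ω)) ∂μ + ∫ ω, klReal (P (Y ω)) (R (Y ω)) ∂μ :=
  integral_klReal_eq_add ha hY hP hR ha_simplex hP_simplex hm hPm hRm fun j _ hg ⟨_, hB⟩ =>
    integral_comp_mul_eq_of_condExp (X := fun ω => a ω j) (h := fun y => P y j) hY hg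
      (integrable_apply_of_mem_simplex ha ha_simplex j) hB (hcond j)

end Integrals

section Param

variable {c : ℕ}

@[simp] lemma completeV_castSucc (pt : Fin c → ℝ) (j : Fin c) :
    completeV pt (Fin.castSucc j) = pt j := by
  simp [completeV]

@[simp] lemma completeV_last (pt : Fin c → ℝ) : completeV pt (Fin.last c) = 1 - ∑ k, pt k := by
  simp [completeV]

lemma completeM_apply (Mt : Fin (c+1) → Fin c → ℝ) (i : Fin (c+1)) :
    completeM Mt i = completeV (Mt i) := rfl

lemma truncM_completeM (Mt : Fin (c+1) → Fin c → ℝ) : truncM (completeM Mt) = Mt := by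
  funext i j; simp [truncM, completeM_apply]

lemma truncV_completeV (pt : Fin c → ℝ) : truncV (completeV pt) = pt := by
  funext j; simp [truncV]

lemma completeV_mem_simplex {pt : Fin c → ℝ} (h : pt ∈ Sset c) :
    completeV pt ∈ simplex (c+1) := by
  refine ⟨fun i => ?_, by simp [Fin.sum_univ_castSucc]⟩
  rcases Fin.eq_castSucc_or_eq_last i with ⟨j, rfl⟩ | rfl
  · simpa using h.1 j
  · simpa using h.2

lemma continuous_completeV : Continuous (completeV : (Fin c → ℝ) → Fin (c+1) → ℝ) := by
  refine continuous_pi fun i => ?_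
  by_cases h : (i : ℕ) < c
  · simp only [completeV, dif_pos h]; fun_prop
  · simp only [completeV, dif_neg h]; fun_prop

lemma continuous_completeM :
    Continuous (completeM : (Fin (c+1) → Fin c → ℝ) → Fin (c+1) → Fin (c+1) → ℝ) :=
  continuous_pi fun i => continuous_completeV.comp (continuous_apply i)

lemma isCompact_Sset (d : ℕ) : IsCompact (Sset d) := by
  refine (isCompact_univ_pi fun _ => isCompact_Icc (a := (0 : ℝ)) (b := 1)).of_isClosed_subset
    ?_ fun x hx i _ => ⟨hx.1 i, (Finset.single_le_sum (fun j _ => hx.1 j) (mem_univ i)).trans hx.2⟩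
  simp only [Sset, Set.ofPred_and, Set.ofPred_forall]
  exact (isClosed_iInter fun i => isClosed_le continuous_const (continuous_apply i)).inter
    (isClosed_le (by fun_prop) continuous_const)

lemma isCompact_Theta : IsCompact (Theta c) := by
  have : Theta c = (Set.univ.pi fun _ => Sset c) ×ˢ Sset c := by ext; simp [Theta]
  exact this ▸ (isCompact_univ_pi fun _ => isCompact_Sset c).prod (isCompact_Sset c)

lemma continuous_l1dist_left (θ' : Param c) : Continuous fun θ => l1dist θ θ' := by
  unfold l1dist; fun_prop

lemma l1dist_self (θ : Param c) : l1dist θ θ = 0 := by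
  simp [l1dist]

lemma _root_.Continuous.eventually_le_add {X ι : Type*} [TopologicalSpace X] [Finite ι]
    {f : X → ι → ℝ} (hf : Continuous f) (x : X) {ρ : ℝ} (hρ : 0 < ρ) :
    ∀ᶠ y in 𝓝 x, ∀ j, f y j ≤ f x j + ρ :=
  eventually_all.2 fun j => (((continuous_apply j).comp hf).continuousAt.eventually_lt
    continuousAt_const (lt_add_of_pos_right _ hρ)).mono fun _ => le_of_lt

lemma eventually_nhds_le_add (x : Param c) {ρ : ℝ} (hρ : 0 < ρ) :
    ∀ᶠ θ in 𝓝 x,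
      mtv (completeM θ.1) (completeV θ.2) ≤ (fun j => mtv (completeM x.1) (completeV x.2) j + ρ) ∧
      ∀ i j, completeM θ.1 i j ≤ completeM x.1 i j + ρ := by
  have hM : Continuous fun θ : Param c => completeM θ.1 := continuous_completeM.comp continuous_fst
  have hV : Continuous fun θ : Param c => completeV θ.2 := continuous_completeV.comp continuous_snd
  have hU : Continuous fun θ : Param c => mtv (completeM θ.1) (completeV θ.2) := by
    unfold mtv; fun_prop
  exact (hU.eventually_le_add x hρ).and
    (eventually_all.2 fun i => ((continuous_apply i).comp hM).eventually_le_add x hρ)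

lemma ofReal_le_fN {N n : ℕ} {aU aL bL : ℕ → Fin (c+1) → ℝ} {θ : Param c}
    (hθ : θ ∈ Theta c) (haU : ∀ r, aU r ∈ simplex (c+1)) (haL : ∀ r, aL r ∈ simplex (c+1))
    (hbL : ∀ r, bL r ∈ simplex (c+1)) {RU : Fin (c+1) → ℝ} {RL : ℕ → Fin (c+1) → ℝ}
    (hU : mtv (completeM θ.1) (completeV θ.2) ≤ RU) (hL : ∀ r, mtv (completeM θ.1) (bL r) ≤ RL r) :
    ENNReal.ofReal ((∑ r ∈ range N, klReal (aU r) RU + ∑ r ∈ range n, klReal (aL r) (RL r)) / N)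
      ≤ fN N n aU aL bL θ := by
  have hMθ : ∀ i, completeM θ.1 i ∈ simplex (c+1) := fun i => completeV_mem_simplex (hθ.1 i)
  have hsum : ∀ {k : ℕ} {f : ℕ → ℝ} {g : ℕ → ℝ≥0∞}, (∀ r, ENNReal.ofReal (f r) ≤ g r) →
      ENNReal.ofReal (∑ r ∈ range k, f r) ≤ ∑ r ∈ range k, g r := fun h =>
    (Finset.le_sum_of_subadditive _ ENNReal.ofReal_zero.le (fun _ _ => ENNReal.ofReal_add_le)
      _ _).trans (Finset.sum_le_sum fun r _ => h r)
  refine (ENNReal.ofReal_div_le (Nat.cast_nonneg _)).trans ?_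
  rw [ENNReal.ofReal_natCast, fN]
  gcongr
  exact ENNReal.ofReal_add_le.trans (add_le_add
    (hsum fun r => ofReal_klReal_le_klDiv (haU r).1
      (mtv_mem_simplex hMθ (completeV_mem_simplex hθ.2)).1 hU)
    (hsum fun r => ofReal_klReal_le_klDiv (haL r).1 (mtv_mem_simplex hMθ (hbL r)).1 (hL r)))

end Param

section Identifiability

variable {C : ℕ} {Ω : Type*} [MeasurableSpace Ω]

lemma abs_sub_le_abs_mtv_sub_add {M M' : Fin C → Fin C → ℝ} (hM : ∀ i, M i ∈ simplex C)
    (hM' : ∀ i, M' i ∈ simplex C) {b : Fin C → ℝ} (hb : b ∈ simplex C) (i j : Fin C) :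
    |M i j - M' i j| ≤ |mtv M b j - mtv M' b j| + 2 * (1 - b i) := by
  set D : Fin C → ℝ := fun l => M l j - M' l j
  have hD : ∀ l, |D l| ≤ 1 := fun l => abs_sub_le_iff.2
    ⟨by linarith [le_one_of_mem_simplex (hM l) j, (hM' l).1 j],
     by linarith [le_one_of_mem_simplex (hM' l) j, (hM l).1 j]⟩
  set rest := ∑ l ∈ univ.erase i, D l * b l
  have hsplit : D i * b i = (mtv M b j - mtv M' b j) - rest := by
    have : mtv M b j - mtv M' b j = ∑ l, D l * b l := by
      simp only [mtv, D, ← Finset.sum_sub_distrib, sub_mul]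
    rw [this, ← Finset.add_sum_erase _ _ (mem_univ i)]
    ring
  have hrest : |rest| ≤ 1 - b i :=
    calc |rest| ≤ ∑ l ∈ univ.erase i, |D l * b l| := abs_sum_le_sum_abs _ _
      _ ≤ ∑ l ∈ univ.erase i, b l := sum_le_sum fun l _ => by
          rw [abs_mul, abs_of_nonneg (hb.1 l)]; exact mul_le_of_le_one_left (hb.1 l) (hD l)
      _ = 1 - b i := by rw [← hb.2, ← Finset.add_sum_erase _ _ (mem_univ i)]; ring
  have hDi : |D i| * b i ≤ |mtv M b j - mtv M' b j| + (1 - b i) := by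
    rw [← abs_of_nonneg (hb.1 i), ← abs_mul, abs_of_nonneg (hb.1 i), hsplit]
    exact (abs_sub _ _).trans (by linarith)
  nlinarith [hD i, le_one_of_mem_simplex hb i]

lemma eq_of_ae_mtv_eq {μ : Measure Ω} {M M' : Fin C → Fin C → ℝ} (hM : ∀ i, M i ∈ simplex C)
    (hM' : ∀ i, M' i ∈ simplex C) {b : Ω → Fin C → ℝ} (hb : ∀ ω, b ω ∈ simplex C)
    (hpos : ∀ i, ∀ ε > (0 : ℝ), 0 < μ {ω | 1 - ε ≤ b ω i})
    (h : ∀ᵐ ω ∂μ, mtv M (b ω) = mtv M' (b ω)) : M = M' := by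
  funext i j
  refine eq_of_forall_dist_le fun ε hε => ?_
  have hfreq : ∃ᵐ ω ∂μ, 1 - ε / 2 ≤ b ω i := frequently_ae_iff.2 (hpos i _ (half_pos hε)).ne'
  obtain ⟨ω, hωi, hω⟩ := (hfreq.and_eventually h).exists
  have := abs_sub_le_abs_mtv_sub_add hM hM' (hb ω) i j
  rw [hω, sub_self, abs_zero] at this
  rw [Real.dist_eq]
  linarith

lemma mtv_injective {M : Fin C → Fin C → ℝ} (h : (Matrix.of M).det ≠ 0) :
    Function.Injective (mtv M) := by
  have : mtv M = fun v => Matrix.vecMul v (Matrix.of M) := by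
    funext v j; simp [mtv, Matrix.vecMul, dotProduct, mul_comm]
  rw [this]
  exact Matrix.vecMul_injective_iff_isUnit.2 ((Matrix.isUnit_iff_isUnit_det _).2 h.isUnit)

lemma integrable_hellingerSq_mtv (μ : Measure Ω) [IsFiniteMeasure μ] {M M' : Fin C → Fin C → ℝ}
    (hM : ∀ i, M i ∈ simplex C) (hM' : ∀ i, M' i ∈ simplex C) {b : Ω → Fin C → ℝ}
    (hb : Measurable b) (hb_simplex : ∀ ω, b ω ∈ simplex C) :
    Integrable (fun ω => hellingerSq (mtv M (b ω)) (mtv M' (b ω))) μ := by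
  refine Integrable.of_bound ?_ 2 (ae_of_all _ fun ω => ?_)
  · exact (continuous_hellingerSq.measurable.comp (by fun_prop : Measurable fun ω =>
      (mtv M (b ω), mtv M' (b ω)))).aestronglyMeasurable
  · rw [Real.norm_eq_abs, abs_of_nonneg (hellingerSq_nonneg _ _)]
    exact hellingerSq_le_two (mtv_mem_simplex hM (hb_simplex ω))
      (mtv_mem_simplex hM' (hb_simplex ω))

variable {c : ℕ} (μ : Measure Ω) [IsProbabilityMeasure μ] {b : Ω → Fin (c+1) → ℝ}
  {M0 : Fin (c+1) → Fin (c+1) → ℝ} {p0 : Fin (c+1) → ℝ} {ξ : ℝ} {x : Param c}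

theorem hellingerSq_gap_pos (hb : Measurable b) (hb_simplex : ∀ ω, b ω ∈ simplex (c+1))
    (hpos : ∀ i, ∀ ε > (0 : ℝ), 0 < μ {ω | 1 - ε ≤ b ω i}) (hM0 : rowStochastic M0)
    (hM0det : (Matrix.of M0).det ≠ 0) (hp0 : p0 ∈ simplex (c+1)) (hξ : 0 < ξ)
    (hx : x ∈ Theta c) (hne : x ≠ (truncM M0, truncV p0)) :
    0 < hellingerSq (mtv M0 p0) (mtv (completeM x.1) (completeV x.2)) +
      ξ * ∫ ω, hellingerSq (mtv M0 (b ω)) (mtv (completeM x.1) (b ω)) ∂μ := by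
  have hM0rows : ∀ i, M0 i ∈ simplex (c+1) := fun i => ⟨hM0.1 i, hM0.2 i⟩
  have hMx : ∀ i, completeM x.1 i ∈ simplex (c+1) := fun i => completeV_mem_simplex (hx.1 i)
  have hH_nonneg : 0 ≤ fun ω => hellingerSq (mtv M0 (b ω)) (mtv (completeM x.1) (b ω)) :=
    fun ω => hellingerSq_nonneg _ _
  have hA := hellingerSq_nonneg (mtv M0 p0) (mtv (completeM x.1) (completeV x.2))
  have hB := mul_nonneg hξ.le (integral_nonneg hH_nonneg (μ := μ))
  refine (add_nonneg hA hB).lt_of_ne fun h0 => hne ?_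
  obtain ⟨hU, hL⟩ := (add_eq_zero_iff_of_nonneg hA hB).1 h0.symm
  have hae := (integral_eq_zero_iff_of_nonneg hH_nonneg
    (integrable_hellingerSq_mtv μ hM0rows hMx hb hb_simplex)).1
    ((mul_eq_zero.1 hL).resolve_left hξ.ne')
  have hM : M0 = completeM x.1 := eq_of_ae_mtv_eq hM0rows hMx hb_simplex hpos <|
    hae.mono fun ω hω => eq_of_hellingerSq_eq_zero (mtv_mem_simplex hM0rows (hb_simplex ω)).1
      (mtv_mem_simplex hMx (hb_simplex ω)).1 hω
  have hp : p0 = completeV x.2 := mtv_injective hM0det <| by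
    rw [eq_of_hellingerSq_eq_zero (mtv_mem_simplex hM0rows hp0).1
      (mtv_mem_simplex hMx (completeV_mem_simplex hx.2)).1 hU, ← hM]
  rw [hM, hp, truncM_completeM, truncV_completeV]

theorem exists_pos_klReal_gap (hb : Measurable b) (hb_simplex : ∀ ω, b ω ∈ simplex (c+1))
    (hpos : ∀ i, ∀ ε > (0 : ℝ), 0 < μ {ω | 1 - ε ≤ b ω i}) (hM0 : rowStochastic M0)
    (hM0det : (Matrix.of M0).det ≠ 0) (hp0 : p0 ∈ simplex (c+1)) (hξ : 0 < ξ)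
    (hx : x ∈ Theta c) (hne : x ≠ (truncM M0, truncV p0)) :
    ∃ ρ > 0, 0 < klReal (mtv M0 p0) (fun j => mtv (completeM x.1) (completeV x.2) j + ρ) +
      ξ * ∫ ω, klReal (mtv M0 (b ω)) (fun j => mtv (completeM x.1) (b ω) j + ρ) ∂μ := by
  have hM0rows : ∀ i, M0 i ∈ simplex (c+1) := fun i => ⟨hM0.1 i, hM0.2 i⟩
  have hMx : ∀ i, completeM x.1 i ∈ simplex (c+1) := fun i => completeV_mem_simplex (hx.1 i)
  have hgap := hellingerSq_gap_pos μ hb hb_simplex hpos hM0 hM0det hp0 hξ hx hne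
  set h := hellingerSq (mtv M0 p0) (mtv (completeM x.1) (completeV x.2)) +
      ξ * ∫ ω, hellingerSq (mtv M0 (b ω)) (mtv (completeM x.1) (b ω)) ∂μ
  -- by `hellingerSq_div_two_sub_le_klReal` the gap is at least `h / 2 - 2 (c+1) (1 + ξ) ρ = h / 4`
  set ρ := h / (8 * (c + 1) * (1 + ξ))
  have hρ : 0 < ρ := by positivity
  refine ⟨ρ, hρ, ?_⟩
  have hU := hellingerSq_div_two_sub_le_klReal (mtv_mem_simplex hM0rows hp0)
    (mtv_mem_simplex hMx (completeV_mem_simplex hx.2)) hρ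
  have hH_int := integrable_hellingerSq_mtv μ hM0rows hMx hb hb_simplex
  have hK_int : Integrable (fun ω => klReal (mtv M0 (b ω))
      (fun j => mtv (completeM x.1) (b ω) j + ρ)) μ :=
    integrable_klReal (by fun_prop) (by fun_prop) (fun ω => mtv_mem_simplex hM0rows (hb_simplex ω))
      hρ fun ω => add_mem_Icc_of_mem_simplex (mtv_mem_simplex hMx (hb_simplex ω)) ρ
  have hL : ∫ ω, (hellingerSq (mtv M0 (b ω)) (mtv (completeM x.1) (b ω)) / 2
      - 2 * ((c + 1 : ℕ) : ℝ) * ρ) ∂μ ≤ _ :=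
    integral_mono ((hH_int.div_const 2).sub (integrable_const _)) hK_int fun ω =>
      hellingerSq_div_two_sub_le_klReal (mtv_mem_simplex hM0rows (hb_simplex ω))
        (mtv_mem_simplex hMx (hb_simplex ω)) hρ
  rw [integral_sub (hH_int.div_const 2) (integrable_const _), integral_div, integral_const,
    probReal_univ, one_smul] at hL
  push_cast at hU hL
  have : 2 * (c + 1) * ρ * (1 + ξ) = h / 4 := by simp only [ρ]; field_simp; ring
  nlinarith

end Identifiability

section StrongLaw

variable {Ω E : Type*} [MeasurableSpace Ω] [MeasurableSpace E]

theorem strong_law_ae_comp {μ : Measure Ω} [IsProbabilityMeasure μ] {X : ℕ → Ω → E}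
    (hindep : iIndepFun X μ) (hident : ∀ r, IdentDistrib (X r) (X 0) μ μ) {φ : E → ℝ}
    (hφ : Measurable φ) {B : ℝ} (hB : ∀ ω, |φ (X 0 ω)| ≤ B) :
    ∀ᵐ ω ∂μ, Tendsto (fun N : ℕ => (∑ r ∈ range N, φ (X r ω)) / N) atTop
      (𝓝 (∫ ω, φ (X 0 ω) ∂μ)) :=
  strong_law_ae_real (fun r ω => φ (X r ω))
    (Integrable.of_bound (hφ.comp_aemeasurable (hident 0).aemeasurable_fst).aestronglyMeasurable B
      (ae_of_all _ fun ω => (Real.norm_eq_abs _).le.trans (hB ω)))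
    (fun _ _ hrs => (hindep.indepFun hrs).comp hφ hφ) fun r => (hident r).comp hφ

lemma tendsto_sum_range_comp_div {u : ℕ → ℝ} {L ξ : ℝ}
    (hu : Tendsto (fun k : ℕ => (∑ r ∈ range k, u r) / k) atTop (𝓝 L)) (hξ : 0 < ξ)
    {n : ℕ → ℕ} (hn : ∀ N, (n N : ℝ) = ξ * N) :
    Tendsto (fun N : ℕ => (∑ r ∈ range (n N), u r) / N) atTop (𝓝 (ξ * L)) := by
  have hn_top : Tendsto n atTop atTop := by
    rw [← tendsto_natCast_atTop_iff (R := ℝ)]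
    simpa only [hn] using tendsto_natCast_atTop_atTop.const_mul_atTop hξ
  refine ((hu.comp hn_top).const_mul ξ).congr' ?_
  filter_upwards [eventually_gt_atTop 0] with N hN
  simp only [Function.comp, hn]
  field_simp

end StrongLaw

theorem _root_.IsCompact.exists_pos_ae_eventually_forall_le {X Ω ι : Type*} [TopologicalSpace X]
    [MeasurableSpace Ω] {μ : Measure Ω} {l : Filter ι} {K : Set X} (hK : IsCompact K)
    {a : ℝ≥0∞} {F : ι → Ω → X → ℝ≥0∞}
    (hloc : ∀ x ∈ K, ∃ U ∈ 𝓝[K] x, ∃ κ > (0 : ℝ), ∀ᵐ ω ∂μ, ∀ᶠ i in l, ∀ θ ∈ U,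
      a + ENNReal.ofReal κ ≤ F i ω θ) :
    ∃ κ > (0 : ℝ), ∀ᵐ ω ∂μ, ∀ᶠ i in l, ∀ θ ∈ K, a + ENNReal.ofReal κ ≤ F i ω θ := by
  refine hK.induction_on ⟨1, one_pos, ae_of_all _ fun _ => Eventually.of_forall fun _ _ h => h.elim⟩
    ?_ ?_ hloc
  · rintro s t hst ⟨κ, hκ, h⟩
    exact ⟨κ, hκ, h.mono fun ω hω => hω.mono fun i hi θ hθ => hi θ (hst hθ)⟩
  · rintro s t ⟨κ₁, hκ₁, h₁⟩ ⟨κ₂, hκ₂, h₂⟩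
    refine ⟨min κ₁ κ₂, lt_min hκ₁ hκ₂, ?_⟩
    filter_upwards [h₁, h₂] with ω hω₁ hω₂
    filter_upwards [hω₁, hω₂] with i hi₁ hi₂
    rintro θ (hθ | hθ)
    · exact le_trans (by gcongr; exact min_le_left _ _) (hi₁ θ hθ)
    · exact le_trans (by gcongr; exact min_le_right _ _) (hi₂ θ hθ)

section Model

variable {Ω : Type*} [MeasurableSpace Ω] (μ : Measure Ω) [IsProbabilityMeasure μ]

theorem ae_tendsto_klReal_average {C : ℕ} {aU aL bL : ℕ → Ω → Fin C → ℝ}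
    (haU_simplex : ∀ ω, aU 0 ω ∈ simplex C) (haL_simplex : ∀ ω, aL 0 ω ∈ simplex C)
    (haU_indep : iIndepFun aU μ) (haU_ident : ∀ r, IdentDistrib (aU r) (aU 0) μ μ)
    (hL_indep : iIndepFun (fun r ω => (aL r ω, bL r ω)) μ)
    (hL_ident : ∀ r,
      IdentDistrib (fun ω => (aL r ω, bL r ω)) (fun ω => (aL 0 ω, bL 0 ω)) μ μ)
    {RU : Fin C → ℝ} {RL : (Fin C → ℝ) → Fin C → ℝ} (hRL : Measurable RL) {m M : ℝ}
    (hm : 0 < m) (hRU : ∀ j, RU j ∈ Set.Icc m M) (hRLm : ∀ ω j, RL (bL 0 ω) j ∈ Set.Icc m M)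
    {ξ : ℝ} (hξ : 0 < ξ) {n : ℕ → ℕ} (hn : ∀ N, (n N : ℝ) = ξ * N) :
    ∀ᵐ ω ∂μ, Tendsto (fun N : ℕ => (∑ r ∈ range N, klReal (aU r ω) RU +
        ∑ r ∈ range (n N), klReal (aL r ω) (RL (bL r ω))) / N) atTop
      (𝓝 (∫ ω, klReal (aU 0 ω) RU ∂μ + ξ * ∫ ω, klReal (aL 0 ω) (RL (bL 0 ω)) ∂μ)) := by
  have hU := strong_law_ae_comp haU_indep haU_ident (φ := fun a => klReal a RU)
    (measurable_klReal.comp (measurable_id.prodMk measurable_const))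
    fun ω => abs_klReal_le (haU_simplex ω) hm hRU
  have hL := strong_law_ae_comp hL_indep hL_ident (φ := fun z => klReal z.1 (RL z.2))
    (measurable_klReal.comp (measurable_fst.prodMk (hRL.comp measurable_snd)))
    fun ω => abs_klReal_le (haL_simplex ω) hm (hRLm ω)
  filter_upwards [hU, hL] with ω hωU hωL
  simpa only [add_div] using hωU.add (tendsto_sum_range_comp_div hωL hξ hn)

variable {c : ℕ} {M0 : Fin (c+1) → Fin (c+1) → ℝ} {p0 : Fin (c+1) → ℝ}

theorem lintegral_loss_add_ofReal {aU aL b : Ω → Fin (c+1) → ℝ} (haU : Measurable aU)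
    (haL : Measurable aL) (hb : Measurable b) (haU_simplex : ∀ ω, aU ω ∈ simplex (c+1))
    (haL_simplex : ∀ ω, aL ω ∈ simplex (c+1)) (hb_simplex : ∀ ω, b ω ∈ simplex (c+1))
    (hM0 : rowStochastic M0) (hM0pos : ∀ i j, 0 < M0 i j) (hp0 : p0 ∈ simplex (c+1))
    {ξ κ : ℝ} (hξ : 0 ≤ ξ) (hκ : 0 ≤ κ) :
    (∫⁻ ω, klDiv (aU ω) (mtv M0 p0) ∂μ) +
        ENNReal.ofReal ξ * (∫⁻ ω, klDiv (aL ω) (mtv M0 (b ω)) ∂μ) + ENNReal.ofReal κ =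
      ENNReal.ofReal (∫ ω, klReal (aU ω) (mtv M0 p0) ∂μ +
        ξ * ∫ ω, klReal (aL ω) (mtv M0 (b ω)) ∂μ + κ) := by
  have hM0rows : ∀ i, M0 i ∈ simplex (c+1) := fun i => ⟨hM0.1 i, hM0.2 i⟩
  obtain ⟨m, hm, hmM0⟩ := exists_pos_le_mtv hM0pos
  have hq0 := mtv_mem_simplex hM0rows hp0
  have hP : ∀ ω, mtv M0 (b ω) ∈ simplex (c+1) := fun ω => mtv_mem_simplex hM0rows (hb_simplex ω)
  have hq0m : ∀ (_ : Ω) j, m ≤ mtv M0 p0 j := fun _ => hmM0 p0 hp0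
  have hPm : ∀ ω j, m ≤ mtv M0 (b ω) j := fun ω => hmM0 _ (hb_simplex ω)
  have h0U := integral_klReal_nonneg (μ := μ) haU_simplex (fun _ => hq0) hm hq0m
  have h0L := integral_klReal_nonneg (μ := μ) haL_simplex hP hm hPm
  rw [lintegral_klDiv_eq_ofReal_integral haU measurable_const haU_simplex (fun _ => hq0) hm hq0m,
    lintegral_klDiv_eq_ofReal_integral haL (by fun_prop) haL_simplex hP hm hPm,
    ← ENNReal.ofReal_mul hξ, ← ENNReal.ofReal_add h0U (mul_nonneg hξ h0L),
    ← ENNReal.ofReal_add (by positivity) hκ]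

theorem ae_tendsto_envelope_average {aU aL bL : ℕ → Ω → Fin (c+1) → ℝ}
    (haU_meas : Measurable (aU 0)) (haL_meas : Measurable (aL 0)) (hbL_meas : Measurable (bL 0))
    (haU_simplex : ∀ r ω, aU r ω ∈ simplex (c+1)) (haL_simplex : ∀ r ω, aL r ω ∈ simplex (c+1))
    (hbL_simplex : ∀ r ω, bL r ω ∈ simplex (c+1))
    (haU_indep : iIndepFun aU μ) (haU_ident : ∀ r, IdentDistrib (aU r) (aU 0) μ μ)
    (hL_indep : iIndepFun (fun r ω => (aL r ω, bL r ω)) μ)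
    (hL_ident : ∀ r,
      IdentDistrib (fun ω => (aL r ω, bL r ω)) (fun ω => (aL 0 ω, bL 0 ω)) μ μ)
    (hM0 : rowStochastic M0) (hM0pos : ∀ i j, 0 < M0 i j) (hp0 : p0 ∈ simplex (c+1))
    (hmeanU : ∀ j, ∫ ω, aU 0 ω j ∂μ = mtv M0 p0 j)
    (hcondL : ∀ j, μ[(fun ω => aL 0 ω j) | MeasurableSpace.comap (bL 0) inferInstance]
      =ᵐ[μ] fun ω => mtv M0 (bL 0 ω) j)
    {ξ : ℝ} (hξ : 0 < ξ) {n : ℕ → ℕ} (hn : ∀ N, (n N : ℝ) = ξ * N)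
    {x : Param c} (hx : x ∈ Theta c) {ρ : ℝ} (hρ : 0 < ρ) :
    ∀ᵐ ω ∂μ, Tendsto (fun N : ℕ =>
        (∑ r ∈ range N, klReal (aU r ω) (fun j => mtv (completeM x.1) (completeV x.2) j + ρ) +
          ∑ r ∈ range (n N), klReal (aL r ω) (fun j => mtv (completeM x.1) (bL r ω) j + ρ)) / N)
      atTop (𝓝 (∫ ω, klReal (aU 0 ω) (mtv M0 p0) ∂μ +
        ξ * ∫ ω, klReal (aL 0 ω) (mtv M0 (bL 0 ω)) ∂μ +
        (klReal (mtv M0 p0) (fun j => mtv (completeM x.1) (completeV x.2) j + ρ) +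
          ξ * ∫ ω, klReal (mtv M0 (bL 0 ω))
            (fun j => mtv (completeM x.1) (bL 0 ω) j + ρ) ∂μ))) := by
  have hM0rows : ∀ i, M0 i ∈ simplex (c+1) := fun i => ⟨hM0.1 i, hM0.2 i⟩
  have hMx : ∀ i, completeM x.1 i ∈ simplex (c+1) := fun i => completeV_mem_simplex (hx.1 i)
  obtain ⟨m, hm, hmM0⟩ := exists_pos_le_mtv hM0pos
  have hm' : 0 < min m ρ := lt_min hm hρ
  have hmM0' : ∀ y ∈ simplex (c+1), ∀ j, min m ρ ≤ mtv M0 y j :=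
    fun y hy j => (min_le_left _ _).trans (hmM0 y hy j)
  have hR : ∀ y ∈ simplex (c+1), ∀ j, y j + ρ ∈ Set.Icc (min m ρ) (1 + ρ) := fun y hy j =>
    ⟨(min_le_right _ _).trans (add_mem_Icc_of_mem_simplex hy ρ j).1,
      (add_mem_Icc_of_mem_simplex hy ρ j).2⟩
  have hU := integral_klReal_eq_add_of_integral_eq haU_meas (haU_simplex 0)
    (mtv_mem_simplex hM0rows hp0) hm' (hmM0' p0 hp0)
    (hR _ (mtv_mem_simplex hMx (completeV_mem_simplex hx.2))) hmeanU
  have hL := integral_klReal_eq_add_of_condExp_eq (R := fun y j => mtv (completeM x.1) y j + ρ)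
    haL_meas hbL_meas (measurable_mtv M0) (by fun_prop) (haL_simplex 0)
    (fun ω => mtv_mem_simplex hM0rows (hbL_simplex 0 ω)) hm' (fun ω => hmM0' _ (hbL_simplex 0 ω))
    (fun ω => hR _ (mtv_mem_simplex hMx (hbL_simplex 0 ω))) hcondL
  filter_upwards [ae_tendsto_klReal_average μ (haU_simplex 0) (haL_simplex 0) haU_indep haU_ident
    hL_indep hL_ident (RL := fun y j => mtv (completeM x.1) y j + ρ) (by fun_prop) hm'
    (hR _ (mtv_mem_simplex hMx (completeV_mem_simplex hx.2)))
    (fun ω => hR _ (mtv_mem_simplex hMx (hbL_simplex 0 ω))) hξ hn] with ω hω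
  convert hω using 2
  rw [hU, hL]
  ring

theorem exists_nhds_ae_eventually_le_fN {aU aL bL : ℕ → Ω → Fin (c+1) → ℝ}
    (haU_meas : Measurable (aU 0)) (haL_meas : Measurable (aL 0)) (hbL_meas : Measurable (bL 0))
    (haU_simplex : ∀ r ω, aU r ω ∈ simplex (c+1)) (haL_simplex : ∀ r ω, aL r ω ∈ simplex (c+1))
    (hbL_simplex : ∀ r ω, bL r ω ∈ simplex (c+1))
    (haU_indep : iIndepFun aU μ) (haU_ident : ∀ r, IdentDistrib (aU r) (aU 0) μ μ)
    (hL_indep : iIndepFun (fun r ω => (aL r ω, bL r ω)) μ)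
    (hL_ident : ∀ r,
      IdentDistrib (fun ω => (aL r ω, bL r ω)) (fun ω => (aL 0 ω, bL 0 ω)) μ μ)
    (hM0 : rowStochastic M0) (hp0 : p0 ∈ simplex (c+1)) (hM0pos : ∀ i j, 0 < M0 i j)
    (hM0det : (Matrix.of M0).det ≠ 0) (hmeanU : ∀ j, ∫ ω, aU 0 ω j ∂μ = mtv M0 p0 j)
    (hcondL : ∀ j, μ[(fun ω => aL 0 ω j) | MeasurableSpace.comap (bL 0) inferInstance]
      =ᵐ[μ] fun ω => mtv M0 (bL 0 ω) j)
    (hposb : ∀ i, ∀ ε > (0 : ℝ), 0 < μ {ω | 1 - ε ≤ bL 0 ω i})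
    {ξ : ℝ} (hξ : 0 < ξ) {n : ℕ → ℕ} (hn : ∀ N, (n N : ℝ) = ξ * N)
    {x : Param c} (hx : x ∈ Theta c) (hne : x ≠ (truncM M0, truncV p0)) :
    ∃ U ∈ 𝓝 x, ∃ κ > (0 : ℝ), ∀ᵐ ω ∂μ, ∀ᶠ N in atTop, ∀ θ ∈ U ∩ Theta c,
      (∫⁻ ω', klDiv (aU 0 ω') (mtv M0 p0) ∂μ) +
          ENNReal.ofReal ξ * (∫⁻ ω', klDiv (aL 0 ω') (mtv M0 (bL 0 ω')) ∂μ) +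
          ENNReal.ofReal κ ≤
        fN N (n N) (fun r => aU r ω) (fun r => aL r ω) (fun r => bL r ω) θ := by
  obtain ⟨ρ, hρ, hgap⟩ :=
    exists_pos_klReal_gap μ hbL_meas (hbL_simplex 0) hposb hM0 hM0det hp0 hξ hx hne
  refine ⟨_, eventually_nhds_le_add x hρ, _, half_pos hgap, ?_⟩
  filter_upwards [ae_tendsto_envelope_average μ haU_meas haL_meas hbL_meas haU_simplex haL_simplex
    hbL_simplex haU_indep haU_ident hL_indep hL_ident hM0 hM0pos hp0 hmeanU hcondL hξ hn hx hρ]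
    with ω hω
  filter_upwards [hω.eventually (lt_mem_nhds ((add_lt_add_iff_left _).2 (half_lt_self hgap)))]
    with N hN
  rintro θ ⟨⟨hθU, hθL⟩, hθ⟩
  rw [lintegral_loss_add_ofReal μ haU_meas haL_meas hbL_meas (haU_simplex 0) (haL_simplex 0)
    (hbL_simplex 0) hM0 hM0pos hp0 hξ.le (half_pos hgap).le]
  exact (ENNReal.ofReal_le_ofReal hN.le).trans (ofReal_le_fN hθ (fun r => haU_simplex r ω)
    (fun r => haL_simplex r ω) (fun r => hbL_simplex r ω) hθU
    fun r j => mtv_le_mtv_add hθL (hbL_simplex r ω) j)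

end Model

theorem stmt9_general
    {Ωs : Type*} [MeasurableSpace Ωs] (μ : Measure Ωs) [IsProbabilityMeasure μ]
    (c : ℕ)
    (aU aL bL : ℕ → Ωs → Fin (c+1) → ℝ)
    (haU_meas : ∀ r, Measurable (aU r)) (haL_meas : ∀ r, Measurable (aL r))
    (hbL_meas : ∀ r, Measurable (bL r))
    (haU_simplex : ∀ r ω, aU r ω ∈ simplex (c+1))
    (haL_simplex : ∀ r ω, aL r ω ∈ simplex (c+1))
    (hbL_simplex : ∀ r ω, bL r ω ∈ simplex (c+1))
    (haU_indep : iIndepFun aU μ)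
    (haU_ident : ∀ r, IdentDistrib (aU r) (aU 0) μ μ)
    (hL_indep : iIndepFun (fun r ω => (aL r ω, bL r ω)) μ)
    (hL_ident : ∀ r,
      IdentDistrib (fun ω => (aL r ω, bL r ω)) (fun ω => (aL 0 ω, bL 0 ω)) μ μ)
    (M0 : Fin (c+1) → Fin (c+1) → ℝ) (p0 : Fin (c+1) → ℝ)
    (hM0 : rowStochastic M0) (hp0 : p0 ∈ simplex (c+1))
    (hM0pos : ∀ i j, 0 < M0 i j)
    (hM0det : (Matrix.of M0).det ≠ 0)
    (hmeanU : ∀ r j, ∫ ω, aU r ω j ∂μ = mtv M0 p0 j)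
    (hcondL : ∀ r j, μ[(fun ω => aL r ω j) | MeasurableSpace.comap (bL r) inferInstance]
      =ᵐ[μ] fun ω => mtv M0 (bL r ω) j)
    (hposb : ∀ (r : ℕ) (i : Fin (c+1)), ∀ ε > (0 : ℝ), 0 < μ {ω | 1 - ε ≤ bL r ω i})
    (ξ : ℝ) (hξ0 : 0 < ξ)
    (n : ℕ → ℕ) (hn : ∀ N, (n N : ℝ) = ξ * N)
    :
    ∀ ε > (0 : ℝ), ∃ κ > (0 : ℝ), ∀ᵐ ω ∂μ,
      (∫⁻ ω', klDiv (aU 0 ω') (mtv M0 p0) ∂μ) +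
          ENNReal.ofReal ξ * (∫⁻ ω', klDiv (aL 0 ω') (mtv M0 (bL 0 ω')) ∂μ) +
          ENNReal.ofReal κ ≤
        Filter.atTop.liminf (fun N =>
          ⨅ θ ∈ {θ : Param c | θ ∈ Theta c ∧ ε < l1dist θ (truncM M0, truncV p0)},
            fN N (n N) (fun r => aU r ω) (fun r => aL r ω) (fun r => bL r ω) θ) := by
  intro ε hε
  set K := Theta c ∩ {θ | ε ≤ l1dist θ (truncM M0, truncV p0)}
  have hK : IsCompact K :=
    isCompact_Theta.inter_right (isClosed_le continuous_const (continuous_l1dist_left _))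
  obtain ⟨κ, hκ, hae⟩ := hK.exists_pos_ae_eventually_forall_le fun x hx => by
    have hne : x ≠ (truncM M0, truncV p0) := by
      rintro rfl
      have h : ε ≤ l1dist _ _ := hx.2
      rw [l1dist_self] at h
      linarith
    obtain ⟨U, hU, κ, hκ, h⟩ := exists_nhds_ae_eventually_le_fN μ (haU_meas 0) (haL_meas 0)
      (hbL_meas 0) haU_simplex haL_simplex hbL_simplex haU_indep haU_ident hL_indep hL_ident hM0
      hp0 hM0pos hM0det (hmeanU 0) (hcondL 0) (hposb 0) hξ0 hn hx.1 hne
    exact ⟨K ∩ U, inter_mem_nhdsWithin K hU, κ, hκ,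
      h.mono fun ω hω => hω.mono fun N hN θ hθ => hN θ ⟨hθ.2, hθ.1.1⟩⟩
  refine ⟨κ, hκ, hae.mono fun ω hω => le_liminf_of_le (by isBoundedDefault) ?_⟩
  exact hω.mono fun N hN => le_iInf₂ fun θ hθ => hN θ ⟨hθ.1, hθ.2.le⟩

/-- identifiability, almost-sure version: for every ε > 0 there is κ > 0 such
that almost surely liminf_N inf_{θ ∈ Θ, ‖θ−θ⁰‖₁ > ε} f_N(θ) ≥ f(θ⁰) + κ. -/
theorem stmt9
    {Ωs : Type*} [MeasurableSpace Ωs] (μ : Measure Ωs) [IsProbabilityMeasure μ]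
    (c : ℕ) (hc : 1 ≤ c)
    (aU aL bL : ℕ → Ωs → Fin (c+1) → ℝ)
    (haU_meas : ∀ r, Measurable (aU r)) (haL_meas : ∀ r, Measurable (aL r))
    (hbL_meas : ∀ r, Measurable (bL r))
    (haU_simplex : ∀ r ω, aU r ω ∈ simplex (c+1))
    (haL_simplex : ∀ r ω, aL r ω ∈ simplex (c+1))
    (hbL_simplex : ∀ r ω, bL r ω ∈ simplex (c+1))
    (haU_indep : iIndepFun aU μ)
    (haU_ident : ∀ r, IdentDistrib (aU r) (aU 0) μ μ)
    (hL_indep : iIndepFun (fun r ω => (aL r ω, bL r ω)) μ)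
    (hL_ident : ∀ r,
      IdentDistrib (fun ω => (aL r ω, bL r ω)) (fun ω => (aL 0 ω, bL 0 ω)) μ μ)
    (hUL_indep : IndepFun (fun ω r => aU r ω) (fun ω r => (aL r ω, bL r ω)) μ)
    (M0 : Fin (c+1) → Fin (c+1) → ℝ) (p0 : Fin (c+1) → ℝ)
    (hM0 : rowStochastic M0) (hp0 : p0 ∈ simplex (c+1))
    (hM0pos : ∀ i j, 0 < M0 i j) (hp0pos : ∀ i, 0 < p0 i)
    (hM0det : (Matrix.of M0).det ≠ 0)
    (hmeanU : ∀ r j, ∫ ω, aU r ω j ∂μ = mtv M0 p0 j)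
    (hcondL : ∀ r j, μ[(fun ω => aL r ω j) | MeasurableSpace.comap (bL r) inferInstance]
      =ᵐ[μ] fun ω => mtv M0 (bL r ω) j)
    (hposb : ∀ (r : ℕ) (i : Fin (c+1)), ∀ ε > (0 : ℝ), 0 < μ {ω | 1 - ε ≤ bL r ω i})
    (ξ : ℝ) (hξ0 : 0 < ξ) (hξ1 : ξ ≤ 1)
    (n : ℕ → ℕ) (hn : ∀ N, (n N : ℝ) = ξ * N)
    :
    ∀ ε > (0 : ℝ), ∃ κ > (0 : ℝ), ∀ᵐ ω ∂μ,
      (∫⁻ ω', klDiv (aU 0 ω') (mtv M0 p0) ∂μ) +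
          ENNReal.ofReal ξ * (∫⁻ ω', klDiv (aL 0 ω') (mtv M0 (bL 0 ω')) ∂μ) +
          ENNReal.ofReal κ ≤
        Filter.atTop.liminf (fun N =>
          ⨅ θ ∈ {θ : Param c | θ ∈ Theta c ∧ ε < l1dist θ (truncM M0, truncV p0)},
            fN N (n N) (fun r => aU r ω) (fun r => aL r ω) (fun r => bL r ω) θ) :=
  stmt9_general μ c aU aL bL haU_meas haL_meas hbL_meas haU_simplex haL_simplex hbL_simplex
    haU_indep haU_ident hL_indep hL_ident M0 p0 hM0 hp0 hM0pos hM0det hmeanU hcondL hposb ξ hξ0 n hn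

end GBQL
end
end

section
/- (Rounding-and-coarsening approximation bound.) Fix a positive integer T and data a_1^U,…,a_N^U ∈ Δ_C, a_1^L,…,a_n^L ∈ Δ_C, b_1,…,b_n ∈ Δ_C with n = ξN, ξ ∈ (0,1]. Then for every θ = (M̃, p̃) whose completion M is row-stochastic with all entries strictly positive and whose completion p belongs to Δ_C: 0 ≤ f̃_{N,T}(θ) − f_N(θ) ≤ −(1/T)·Σ_{j=1}^C log((M'p)_j) − (ξ/T)·Σ_{j=1}^C log(min_{1≤i≤C} M_{ij}). -/
open MeasureTheory ProbabilityTheory Filter Finset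
open scoped ENNReal NNReal BigOperators

noncomputable section

namespace GBQL

lemma ceil_bounds (T : ℕ) (hT : 1 ≤ T) (x : ℝ) :
    0 ≤ ((⌈(T : ℝ) * x⌉ : ℤ) : ℝ) / T - x ∧ ((⌈(T : ℝ) * x⌉ : ℤ) : ℝ) / T - x ≤ 1 / T := by
  have hT0 : (0:ℝ) < T := by exact_mod_cast hT
  constructor
  · rw [sub_nonneg, le_div_iff₀ hT0]
    calc x * T = (T:ℝ) * x := by ring
      _ ≤ _ := Int.le_ceil _
  · rw [sub_le_iff_le_add, div_le_iff₀ hT0, add_mul, one_div_mul_cancel (ne_of_gt hT0)]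
    have h := (Int.ceil_lt_add_one ((T:ℝ) * x)).le
    nlinarith [h]

/-- rounding-and-coarsening approximation bound:
0 ≤ f̃_{N,T}(θ) − f_N(θ) ≤ −(1/T)·Σ_j log((M'p)_j) − (ξ/T)·Σ_j log(min_i M_{ij}). -/
theorem stmt17 (c : ℕ) (hc : 1 ≤ c)
    (T : ℕ) (hT : 1 ≤ T) (N nn : ℕ) (hN : 1 ≤ N)
    (ξ : ℝ) (hξ0 : 0 < ξ) (hξ1 : ξ ≤ 1) (hn : (nn : ℝ) = ξ * N)
    (aU aL bL : ℕ → Fin (c+1) → ℝ)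
    (haU : ∀ r < N, aU r ∈ simplex (c+1))
    (haL : ∀ r < nn, aL r ∈ simplex (c+1))
    (hbL : ∀ r < nn, bL r ∈ simplex (c+1))
    (θ : Param c)
    (hMpos : ∀ i j, 0 < completeM θ.1 i j)
    (hp : completeV θ.2 ∈ simplex (c+1)) :
    let M := completeM θ.1
    let p := completeV θ.2
    let fNT : ℝ := fNreal N nn aU aL bL θ -
      (1 / N) * (∑ r ∈ Finset.range N, ∑ j,
        (((⌈(T : ℝ) * aU r j⌉ : ℤ) : ℝ) / T - aU r j) * Real.log (mtv M p j)) -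
      (1 / N) * ∑ r ∈ Finset.range nn, ∑ j,
        (((⌈(T : ℝ) * aL r j⌉ : ℤ) : ℝ) / T - aL r j) * Real.log (mtv M (bL r) j)
    0 ≤ fNT - fNreal N nn aU aL bL θ ∧
      fNT - fNreal N nn aU aL bL θ ≤
        -(1 / T) * (∑ j, Real.log (mtv M p j)) -
          (ξ / T) * ∑ j, Real.log (Finset.univ.inf' Finset.univ_nonempty fun i => M i j) := by
  intro M p fNT
  have hT0 : (0:ℝ) < T := by exact_mod_cast hT
  have hN0 : (0:ℝ) < N := by exact_mod_cast hN
  -- rows of M sum to 1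
  have hrow : ∀ i, ∑ j, M i j = 1 := by
    intro i
    show ∑ j, completeM θ.1 i j = 1
    rw [Fin.sum_univ_castSucc]
    have h1 : ∀ j : Fin c, completeM θ.1 i (Fin.castSucc j) = θ.1 i j := by
      intro j
      simp [completeM, Fin.is_lt]
    have h2 : completeM θ.1 i (Fin.last c) = 1 - ∑ k, θ.1 i k := by
      simp [completeM]
    rw [Finset.sum_congr rfl fun j _ => h1 j, h2]
    ring
  have hMle1 : ∀ i j, M i j ≤ 1 := fun i j =>
    (hrow i) ▸ Finset.single_le_sum (fun k _ => (hMpos i k).le) (Finset.mem_univ j)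
  have hinf_pos : ∀ j, 0 < Finset.univ.inf' Finset.univ_nonempty fun i => M i j := by
    intro j
    rw [Finset.lt_inf'_iff]
    exact fun i _ => hMpos i j
  -- bounds on mtv M q j for q in the simplex
  have hq : ∀ q : Fin (c+1) → ℝ, q ∈ simplex (c+1) → ∀ j,
      0 < mtv M q j ∧ mtv M q j ≤ 1 ∧
        (Finset.univ.inf' Finset.univ_nonempty fun i => M i j) ≤ mtv M q j := by
    intro q hqmem j
    obtain ⟨hq0, hq1⟩ := hqmem
    have hinf_le : ∀ i : Fin (c+1),
        (Finset.univ.inf' Finset.univ_nonempty fun i => M i j) ≤ M i j :=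
      fun i => Finset.inf'_le _ (Finset.mem_univ i)
    have hle : (Finset.univ.inf' Finset.univ_nonempty fun i => M i j) ≤ mtv M q j := by
      calc (Finset.univ.inf' Finset.univ_nonempty fun i => M i j)
          = (Finset.univ.inf' Finset.univ_nonempty fun i => M i j) * ∑ i, q i := by
            rw [hq1, mul_one]
        _ = ∑ i, (Finset.univ.inf' Finset.univ_nonempty fun i => M i j) * q i := by
            rw [Finset.mul_sum]
        _ ≤ ∑ i, M i j * q i :=
            Finset.sum_le_sum fun i _ => mul_le_mul_of_nonneg_right (hinf_le i) (hq0 i)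
        _ = mtv M q j := rfl
    refine ⟨lt_of_lt_of_le (hinf_pos j) hle, ?_, hle⟩
    calc mtv M q j = ∑ i, M i j * q i := rfl
      _ ≤ ∑ i, 1 * q i :=
          Finset.sum_le_sum fun i _ => mul_le_mul_of_nonneg_right (hMle1 i j) (hq0 i)
      _ = 1 := by simp [hq1]
  have hlogp : ∀ j, Real.log (mtv M p j) ≤ 0 := fun j =>
    Real.log_nonpos (hq p hp j).1.le (hq p hp j).2.1
  have hlogb : ∀ r < nn, ∀ j, Real.log (mtv M (bL r) j) ≤ 0 := fun r hr j =>
    Real.log_nonpos (hq (bL r) (hbL r hr) j).1.le (hq (bL r) (hbL r hr) j).2.1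
  have hlogb' : ∀ r < nn, ∀ j,
      Real.log (Finset.univ.inf' Finset.univ_nonempty fun i => M i j) ≤
        Real.log (mtv M (bL r) j) := fun r hr j =>
    Real.log_le_log (hinf_pos j) (hq (bL r) (hbL r hr) j).2.2
  have hfNT : fNT = fNreal N nn aU aL bL θ -
      (1 / N) * (∑ r ∈ Finset.range N, ∑ j,
        (((⌈(T : ℝ) * aU r j⌉ : ℤ) : ℝ) / T - aU r j) * Real.log (mtv M p j)) -
      (1 / N) * ∑ r ∈ Finset.range nn, ∑ j,
        (((⌈(T : ℝ) * aL r j⌉ : ℤ) : ℝ) / T - aL r j) * Real.log (mtv M (bL r) j) := rfl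
  -- the two big double sums
  have hSA_nonpos : (∑ r ∈ Finset.range N, ∑ j,
      (((⌈(T : ℝ) * aU r j⌉ : ℤ) : ℝ) / T - aU r j) * Real.log (mtv M p j)) ≤ 0 :=
    Finset.sum_nonpos fun r _ => Finset.sum_nonpos fun j _ =>
      mul_nonpos_of_nonneg_of_nonpos (ceil_bounds T hT (aU r j)).1 (hlogp j)
  have hSB_nonpos : (∑ r ∈ Finset.range nn, ∑ j,
      (((⌈(T : ℝ) * aL r j⌉ : ℤ) : ℝ) / T - aL r j) * Real.log (mtv M (bL r) j)) ≤ 0 :=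
    Finset.sum_nonpos fun r hr => Finset.sum_nonpos fun j _ =>
      mul_nonpos_of_nonneg_of_nonpos (ceil_bounds T hT (aL r j)).1
        (hlogb r (Finset.mem_range.mp hr) j)
  have hNinv : (0:ℝ) ≤ 1 / N := by positivity
  -- lower bounds on the double sums
  have hSA : (1 / (T:ℝ)) * ∑ j, Real.log (mtv M p j) ≤
      (1 / N) * ∑ r ∈ Finset.range N, ∑ j,
        (((⌈(T : ℝ) * aU r j⌉ : ℤ) : ℝ) / T - aU r j) * Real.log (mtv M p j) := by
    have hs : ∑ r ∈ Finset.range N, ∑ j, (1 / (T:ℝ)) * Real.log (mtv M p j) ≤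
        ∑ r ∈ Finset.range N, ∑ j,
          (((⌈(T : ℝ) * aU r j⌉ : ℤ) : ℝ) / T - aU r j) * Real.log (mtv M p j) :=
      Finset.sum_le_sum fun r _ => Finset.sum_le_sum fun j _ =>
        mul_le_mul_of_nonpos_right (ceil_bounds T hT (aU r j)).2 (hlogp j)
    have h2 : ∑ r ∈ Finset.range N, ∑ j, (1 / (T:ℝ)) * Real.log (mtv M p j) =
        (N:ℝ) * ∑ j, (1 / (T:ℝ)) * Real.log (mtv M p j) := by
      rw [Finset.sum_const, Finset.card_range, nsmul_eq_mul]
    have e : (1 / (N:ℝ)) * ((N:ℝ) * ∑ j, (1 / (T:ℝ)) * Real.log (mtv M p j)) =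
        (1 / (T:ℝ)) * ∑ j, Real.log (mtv M p j) := by
      rw [← mul_assoc, one_div_mul_cancel hN0.ne', one_mul, ← Finset.mul_sum]
    calc (1 / (T:ℝ)) * ∑ j, Real.log (mtv M p j)
        = (1 / (N:ℝ)) * ∑ r ∈ Finset.range N, ∑ j, (1 / (T:ℝ)) * Real.log (mtv M p j) := by
          rw [h2, e]
      _ ≤ _ := mul_le_mul_of_nonneg_left hs hNinv
  have hSB : (ξ / (T:ℝ)) * ∑ j,
      Real.log (Finset.univ.inf' Finset.univ_nonempty fun i => M i j) ≤
      (1 / N) * ∑ r ∈ Finset.range nn, ∑ j,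
        (((⌈(T : ℝ) * aL r j⌉ : ℤ) : ℝ) / T - aL r j) * Real.log (mtv M (bL r) j) := by
    have hs : ∑ r ∈ Finset.range nn, ∑ j,
          (1 / (T:ℝ)) * Real.log (Finset.univ.inf' Finset.univ_nonempty fun i => M i j) ≤
        ∑ r ∈ Finset.range nn, ∑ j,
          (((⌈(T : ℝ) * aL r j⌉ : ℤ) : ℝ) / T - aL r j) * Real.log (mtv M (bL r) j) := by
      refine Finset.sum_le_sum fun r hr => Finset.sum_le_sum fun j _ => ?_
      have hrn := Finset.mem_range.mp hr
      calc (1 / (T:ℝ)) * Real.log (Finset.univ.inf' Finset.univ_nonempty fun i => M i j)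
          ≤ (1 / (T:ℝ)) * Real.log (mtv M (bL r) j) :=
            mul_le_mul_of_nonneg_left (hlogb' r hrn j) (by positivity)
        _ ≤ _ := mul_le_mul_of_nonpos_right (ceil_bounds T hT (aL r j)).2 (hlogb r hrn j)
    have h2 : ∑ r ∈ Finset.range nn, ∑ j,
        (1 / (T:ℝ)) * Real.log (Finset.univ.inf' Finset.univ_nonempty fun i => M i j) =
        (nn:ℝ) * ∑ j, (1 / (T:ℝ)) *
          Real.log (Finset.univ.inf' Finset.univ_nonempty fun i => M i j) := by
      rw [Finset.sum_const, Finset.card_range, nsmul_eq_mul]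
    have e : (1 / (N:ℝ)) * ((nn:ℝ) * ∑ j, (1 / (T:ℝ)) *
        Real.log (Finset.univ.inf' Finset.univ_nonempty fun i => M i j)) =
        (ξ / (T:ℝ)) * ∑ j,
          Real.log (Finset.univ.inf' Finset.univ_nonempty fun i => M i j) := by
      rw [hn, ← Finset.mul_sum]
      field_simp
    calc (ξ / (T:ℝ)) * ∑ j,
          Real.log (Finset.univ.inf' Finset.univ_nonempty fun i => M i j)
        = (1 / (N:ℝ)) * ∑ r ∈ Finset.range nn, ∑ j, (1 / (T:ℝ)) *
            Real.log (Finset.univ.inf' Finset.univ_nonempty fun i => M i j) := by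
          rw [h2, e]
      _ ≤ _ := mul_le_mul_of_nonneg_left hs hNinv
  constructor
  · rw [hfNT]
    have h1 := mul_nonpos_of_nonneg_of_nonpos hNinv hSA_nonpos
    have h2 := mul_nonpos_of_nonneg_of_nonpos hNinv hSB_nonpos
    linarith
  · rw [hfNT]
    linarith [hSA, hSB]

end GBQL
end
end
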